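/- arXiv:2402.07929 — 4 statements merged into one kernel-verified Lean document; each statement's English description precedes it below -/
import Mathlib

section
/- Let j be a positive integer not divisible by 10 and let b, c be positive integers, and set a = j·10^c. Then the minimum of the 2-adic valuation and the 5-adic valuation of ᵇa equals c·(ᵇ⁻¹a). -/
/-- Integer tetration: `tet a 0 = 1`, `tet a (b+1) = a ^ tet a b`. -/
def tet (a : ℕ) : ℕ → ℕ
  | 0 => 1
  | b + 1 => a ^ tet a b

/-! With `10 = 2 * 5`, `min (v₂ m) (v₅ m)` vanishes on `j` because `10 ∤ j`, grows by one with
each factor `10`, and scales by `n` when `m` is raised to the `n`-th power; so on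
`ᵇa = a ^ (ᵇ⁻¹a)` it equals `c * ᵇ⁻¹a`. -/

section TwoPrimes

variable {p q : ℕ} [Fact p.Prime] [Fact q.Prime]

lemma min_padicValNat_eq_zero_of_not_mul_dvd (hpq : p ≠ q) {j : ℕ} (hj : ¬ p * q ∣ j) :
    min (padicValNat p j) (padicValNat q j) = 0 := by
  by_contra h
  have hp : p ∣ j := dvd_of_one_le_padicValNat (by omega)
  have hq : q ∣ j := dvd_of_one_le_padicValNat (by omega)
  exact hj ((Nat.coprime_primes Fact.out Fact.out |>.mpr hpq).mul_dvd_of_dvd_of_dvd hp hq)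

lemma padicValNat_mul_mul_pow (hpq : p ≠ q) {j : ℕ} (hj : j ≠ 0) (c : ℕ) :
    padicValNat p (j * (p * q) ^ c) = padicValNat p j + c := by
  have hp : p ≠ 0 := (Fact.out : p.Prime).ne_zero
  have hq : q ≠ 0 := (Fact.out : q.Prime).ne_zero
  rw [padicValNat.mul hj (by positivity), padicValNat.pow, padicValNat.mul hp hq,
    padicValNat_self, padicValNat_primes hpq, add_zero, mul_one]

lemma min_padicValNat_mul_mul_pow (hpq : p ≠ q) {j : ℕ} (hj : j ≠ 0) (hpqj : ¬ p * q ∣ j)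
    (c : ℕ) : min (padicValNat p (j * (p * q) ^ c)) (padicValNat q (j * (p * q) ^ c)) = c := by
  rw [padicValNat_mul_mul_pow hpq hj, mul_comm p q, padicValNat_mul_mul_pow hpq.symm hj,
    min_add_add_right, min_padicValNat_eq_zero_of_not_mul_dvd hpq hpqj, zero_add]

variable (p q) in
lemma min_padicValNat_pow (a n : ℕ) :
    min (padicValNat p (a ^ n)) (padicValNat q (a ^ n)) =
      n * min (padicValNat p a) (padicValNat q a) := by
  rw [padicValNat.pow, padicValNat.pow, min_mul_mul_left]

end TwoPrimes

instance : Fact (Nat.Prime 5) := ⟨by norm_num⟩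

theorem stmt_3_general (j b c : ℕ) (hj : 0 < j) (hj10 : ¬ (10 ∣ j)) (hb : 0 < b) :
    min (padicValNat 2 (tet (j * 10 ^ c) b)) (padicValNat 5 (tet (j * 10 ^ c) b)) =
      c * tet (j * 10 ^ c) (b - 1) := by
  obtain ⟨b, rfl⟩ : ∃ b', b = b' + 1 := ⟨b - 1, by omega⟩
  have hv : min (padicValNat 2 (j * 10 ^ c)) (padicValNat 5 (j * 10 ^ c)) = c :=
    min_padicValNat_mul_mul_pow (p := 2) (q := 5) (by norm_num) hj.ne' hj10 c
  rw [Nat.add_sub_cancel, tet, min_padicValNat_pow, hv, mul_comm]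

theorem stmt_3 (j b c : ℕ) (hj : 0 < j) (hj10 : ¬ (10 ∣ j)) (hb : 0 < b) (hc : 0 < c) :
    min (padicValNat 2 (tet (j * 10 ^ c) b)) (padicValNat 5 (tet (j * 10 ^ c) b)) =
      c * tet (j * 10 ^ c) (b - 1) :=
  stmt_3_general j b c hj hj10 hb
end

section
/- Let j be a positive integer not divisible by 10 and let c be a positive integer, and set a = j·10^c. For every positive integer b, the largest natural number k such that ᵇ⁺¹a ≡ ᵇa (mod 10^k) (i.e., the number of rightmost decimal digits shared by ᵇa and ᵇ⁺¹a) equals c·(ᵇ⁻¹a). -/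
@[simp]
theorem tet_succ (a b : ℕ) : tet a (b + 1) = a ^ tet a b := rfl

theorem isGreatest_modEq_pow_of_sub_eq {m n x y u : ℕ} (hm : 0 < m) (hxy : x ≤ y)
    (hsub : y - x = m ^ n * u) (hu : ¬ m ∣ u) :
    IsGreatest {k : ℕ | y ≡ x [MOD m ^ k]} n := by
  have hdvd (k : ℕ) : y ≡ x [MOD m ^ k] ↔ m ^ k ∣ m ^ n * u := by
    rw [← hsub, Nat.ModEq.comm, Nat.modEq_iff_dvd' hxy]
  refine ⟨(hdvd n).mpr (dvd_mul_right _ _), fun k hk => ?_⟩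
  by_contra! hnk
  have : m ^ n * m ∣ m ^ n * u :=
    (pow_succ m n ▸ Nat.pow_dvd_pow m hnk).trans ((hdvd k).mp hk)
  exact hu (Nat.dvd_of_mul_dvd_mul_left (pow_pos hm n) this)

theorem Nat.pow_sub_pow_eq_mul (a : ℕ) {s t : ℕ} (hst : s ≤ t) :
    a ^ t - a ^ s = a ^ s * (a ^ (t - s) - 1) := by
  rw [Nat.mul_sub_one, pow_mul_pow_sub a hst]

theorem Nat.coprime_sub_one_of_dvd {m x : ℕ} (hx : 0 < x) (hmx : m ∣ x) :
    Nat.Coprime (x - 1) m :=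
  Nat.Coprime.coprime_dvd_right hmx <|
    (Nat.coprime_self_sub_left hx).mpr (Nat.coprime_one_left x)

theorem not_dvd_pow_mul_sub_one {m j x : ℕ} (hm : Squarefree m) (hmj : ¬ m ∣ j)
    (hx : 0 < x) (hmx : m ∣ x) (n : ℕ) : ¬ m ∣ j ^ n * (x - 1) := by
  intro h
  have hjn : m ∣ j ^ n := ((Nat.coprime_sub_one_of_dvd hx hmx).symm).dvd_of_dvd_mul_right h
  rcases n.eq_zero_or_pos with rfl | hn
  · exact hmj (Nat.dvd_one.mp hjn ▸ one_dvd j)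
  · exact hmj ((hm.dvd_pow_iff_dvd hn.ne').mp hjn)

theorem squarefree_ten : Squarefree 10 :=
  (Nat.squarefree_mul (by norm_num)).mpr ⟨Nat.prime_two.squarefree, Nat.prime_five.squarefree⟩

theorem stmt_6_general (j c : ℕ) (hj10 : ¬ (10 ∣ j)) (hc : 0 < c)
    (b : ℕ) (hb : 0 < b) :
    IsGreatest {k : ℕ | tet (j * 10 ^ c) (b + 1) ≡ tet (j * 10 ^ c) b [MOD 10 ^ k]}
      (c * tet (j * 10 ^ c) (b - 1)) := by
  obtain ⟨b, rfl⟩ : ∃ b', b = b' + 1 := ⟨b - 1, by omega⟩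
  set a := j * 10 ^ c
  set T := tet a b
  have hten : 10 ∣ a := Dvd.dvd.mul_left (dvd_pow_self 10 hc.ne') j
  have ha : 1 < a := by
    have : j ≠ 0 := by rintro rfl; exact hj10 (dvd_zero 10)
    have : 10 ≤ a := Nat.le_of_dvd (by positivity) hten
    omega
  have hT : T < a ^ T := Nat.lt_pow_self ha
  have hpos : 0 < a ^ (a ^ T - T) := by positivity
  simp only [tet_succ, Nat.add_sub_cancel]
  refine isGreatest_modEq_pow_of_sub_eq (by norm_num) (Nat.pow_le_pow_right ha.le hT.le)
    (u := j ^ T * (a ^ (a ^ T - T) - 1)) ?_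
    (not_dvd_pow_mul_sub_one squarefree_ten hj10 hpos (dvd_pow hten (by omega)) T)
  rw [Nat.pow_sub_pow_eq_mul a hT.le, ← mul_assoc]
  congr 1
  rw [mul_pow, pow_mul, mul_comm]

theorem stmt_6 (j c : ℕ) (hj : 0 < j) (hj10 : ¬ (10 ∣ j)) (hc : 0 < c)
    (b : ℕ) (hb : 0 < b) :
    IsGreatest {k : ℕ | tet (j * 10 ^ c) (b + 1) ≡ tet (j * 10 ^ c) b [MOD 10 ^ k]}
      (c * tet (j * 10 ^ c) (b - 1)) :=
  stmt_6_general j c hj10 hc b hb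
end

section
/- Let j be a positive integer not divisible by 10 and let c be a positive integer, and set a = j·10^c. For every integer b ≥ 2, the congruence speed of a at height b equals c·(ᵇ⁻¹a − ᵇ⁻²a); that is, (the largest k with ᵇ⁺¹a ≡ ᵇa (mod 10^k)) minus (the largest k with ᵇa ≡ ᵇ⁻¹a (mod 10^k)) equals c·(ᵇ⁻¹a − ᵇ⁻²a). -/
/-- The number of rightmost decimal digits shared by `x` and `y`, i.e. the
largest `k` such that `x ≡ y (mod 10^k)`. -/
noncomputable def sharedDigits (x y : ℕ) : ℕ := sSup {k : ℕ | x ≡ y [MOD 10 ^ k]}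

/-- The congruence speed of `a` at height `b ≥ 1`. -/
noncomputable def congSpeed (a b : ℕ) : ℤ :=
  (sharedDigits (tet a (b + 1)) (tet a b) : ℤ) - (sharedDigits (tet a b) (tet a (b - 1)) : ℤ)

lemma sharedDigits_eq_of_sub_eq {x y m u : ℕ} (hyx : y ≤ x) (hxy : x - y = 10 ^ m * u)
    (hu : ¬ 10 ∣ u) : sharedDigits x y = m := by
  have hset : {k : ℕ | x ≡ y [MOD 10 ^ k]} = Set.Iic m := by
    ext k
    rw [Set.mem_ofPred_eq, Set.mem_Iic, Nat.ModEq.comm, Nat.modEq_iff_dvd' hyx, hxy]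
    refine ⟨fun hk => ?_, fun hk => (pow_dvd_pow 10 hk).trans (dvd_mul_right _ _)⟩
    by_contra! hmk
    have hdvd : 10 ^ m * 10 ∣ 10 ^ m * u := by
      rw [← pow_succ]
      exact (pow_dvd_pow 10 hmk).trans hk
    exact hu ((Nat.mul_dvd_mul_iff_left (by positivity)).1 hdvd)
  rw [sharedDigits, hset, csSup_Iic]

lemma not_ten_dvd_pow {j : ℕ} (hj : ¬ 10 ∣ j) (s : ℕ) : ¬ 10 ∣ j ^ s := by
  have hsq : Squarefree (10 : ℕ) :=
    Nat.squarefree_mul_iff.2 ⟨by norm_num, Nat.prime_two.squarefree, Nat.prime_five.squarefree⟩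
  rcases Nat.eq_zero_or_pos s with rfl | hs
  · norm_num
  · rwa [hsq.dvd_pow_iff_dvd hs.ne']

lemma coprime_pow_sub_one_of_dvd {a n k : ℕ} (ha0 : a ≠ 0) (ha : n ∣ a) (hk : k ≠ 0) :
    Nat.Coprime (a ^ k - 1) n := by
  have hpos : 1 ≤ a ^ k := Nat.one_le_iff_ne_zero.2 (pow_ne_zero k ha0)
  have hdvd : n ∣ a ^ k - 1 + 1 := by
    rw [Nat.sub_add_cancel hpos]
    exact dvd_pow ha hk
  exact (Nat.coprime_self_add_right.2 (Nat.coprime_one_right _)).coprime_dvd_right hdvd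

lemma sharedDigits_pow_pow {j c s t : ℕ} (hj : ¬ 10 ∣ j) (hc : 0 < c) (hst : s < t) :
    sharedDigits ((j * 10 ^ c) ^ t) ((j * 10 ^ c) ^ s) = c * s := by
  set a := j * 10 ^ c
  have ha : 10 ∣ a := Dvd.dvd.mul_left (dvd_pow_self 10 hc.ne') j
  have ha0 : a ≠ 0 := by rintro h; simp_all [a]
  have hsub : a ^ t - a ^ s = 10 ^ (c * s) * (j ^ s * (a ^ (t - s) - 1)) := by
    calc a ^ t - a ^ s = a ^ s * (a ^ (t - s) - 1) := by
          rw [Nat.mul_sub_one, ← pow_add, Nat.add_sub_cancel' hst.le]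
      _ = 10 ^ (c * s) * (j ^ s * (a ^ (t - s) - 1)) := by
          rw [mul_pow, ← pow_mul, mul_comm c]; ring
  refine sharedDigits_eq_of_sub_eq (Nat.pow_le_pow_right (Nat.pos_of_ne_zero ha0) hst.le) hsub ?_
  intro h10
  exact not_ten_dvd_pow hj s
    ((coprime_pow_sub_one_of_dvd ha0 ha (Nat.sub_ne_zero_of_lt hst)).symm.dvd_of_dvd_mul_right h10)

lemma tet_lt_tet_succ {a : ℕ} (ha : 1 < a) (n : ℕ) : tet a n < tet a (n + 1) :=
  Nat.lt_pow_self ha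

lemma sharedDigits_tet_succ_succ {j c : ℕ} (hj : ¬ 10 ∣ j) (hc : 0 < c) (m : ℕ) :
    sharedDigits (tet (j * 10 ^ c) (m + 2)) (tet (j * 10 ^ c) (m + 1))
      = c * tet (j * 10 ^ c) m := by
  have hj0 : 0 < j := Nat.pos_of_ne_zero (by rintro rfl; simp at hj)
  have ha : 1 < j * 10 ^ c := Nat.one_lt_mul_iff.2
    ⟨hj0, by positivity, Or.inr (Nat.one_lt_pow hc.ne' (by norm_num))⟩
  exact sharedDigits_pow_pow hj hc (tet_lt_tet_succ ha m)

theorem stmt_7_general (j c : ℕ) (hj10 : ¬ (10 ∣ j)) (hc : 0 < c)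
    (b : ℕ) (hb : 2 ≤ b) :
    congSpeed (j * 10 ^ c) b =
      (c : ℤ) * ((tet (j * 10 ^ c) (b - 1) : ℤ) - (tet (j * 10 ^ c) (b - 2) : ℤ)) := by
  obtain ⟨m, rfl⟩ : ∃ m, b = m + 2 := ⟨b - 2, by omega⟩
  rw [congSpeed, Nat.add_sub_cancel, show m + 2 - 1 = m + 1 from rfl,
    sharedDigits_tet_succ_succ hj10 hc (m + 1), sharedDigits_tet_succ_succ hj10 hc m]
  push_cast
  ring

theorem stmt_7 (j c : ℕ) (hj : 0 < j) (hj10 : ¬ (10 ∣ j)) (hc : 0 < c)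
    (b : ℕ) (hb : 2 ≤ b) :
    congSpeed (j * 10 ^ c) b =
      (c : ℤ) * ((tet (j * 10 ^ c) (b - 1) : ℤ) - (tet (j * 10 ^ c) (b - 2) : ℤ)) :=
  stmt_7_general j c hj10 hc b hb
end

section
/- Let j be a positive integer not divisible by 10 and let c be a positive integer, and set a = j·10^c. The congruence speed of a at height 1 equals c; that is, (the largest k with ²a ≡ ¹a (mod 10^k)) minus (the largest k with ¹a ≡ ⁰a (mod 10^k)) equals c. -/
@[simp] lemma tet_zero (a : ℕ) : tet a 0 = 1 := rfl

@[simp] lemma tet_one (a : ℕ) : tet a 1 = a := by simp [tet]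

@[simp] lemma tet_two (a : ℕ) : tet a 2 = a ^ a := by simp [tet]

lemma sharedDigits_eq_of_modEq_of_not_modEq {x y n : ℕ} (h : x ≡ y [MOD 10 ^ n])
    (h' : ¬ x ≡ y [MOD 10 ^ (n + 1)]) : sharedDigits x y = n := by
  have hset : {k : ℕ | x ≡ y [MOD 10 ^ k]} = Set.Iic n := by
    ext k
    refine ⟨fun hk => ?_, fun hk => h.of_dvd (pow_dvd_pow 10 hk)⟩
    by_contra hkn
    exact h' (hk.of_dvd (pow_dvd_pow 10 (Nat.succ_le_of_lt (not_le.mp hkn))))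
  rw [sharedDigits, hset, csSup_Iic]

lemma sharedDigits_one_eq_zero_of_ten_dvd {a : ℕ} (ha : 10 ∣ a) : sharedDigits a 1 = 0 := by
  refine sharedDigits_eq_of_modEq_of_not_modEq (by simp [Nat.modEq_one]) fun h => ?_
  rw [zero_add, pow_one] at h
  exact absurd ((h.dvd_iff dvd_rfl).mp ha) (by norm_num)

lemma pow_dvd_pow_self {d a n : ℕ} (hd : d ∣ a) (hn : n ≤ a) : d ^ n ∣ a ^ a :=
  (pow_dvd_pow_of_dvd hd n).trans (pow_dvd_pow a hn)

lemma sharedDigits_pow_self {j c : ℕ} (hj10 : ¬ 10 ∣ j) (hc : 0 < c) :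
    sharedDigits ((j * 10 ^ c) ^ (j * 10 ^ c)) (j * 10 ^ c) = c := by
  set a := j * 10 ^ c
  have hj : 0 < j := Nat.pos_of_ne_zero fun h => hj10 (h ▸ dvd_zero 10)
  have hca : c + 1 ≤ a := (Nat.lt_pow_self (by norm_num)).trans_le (Nat.le_mul_of_pos_left _ hj)
  have hpow_dvd_a : 10 ^ c ∣ a := dvd_mul_left _ j
  have hten_dvd_a : 10 ∣ a := (dvd_pow_self 10 hc.ne').trans hpow_dvd_a
  refine sharedDigits_eq_of_modEq_of_not_modEq ?_ fun h => hj10 ?_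
  · exact (Nat.modEq_zero_iff_dvd.mpr (pow_dvd_pow_self hten_dvd_a (by omega))).trans
      (Nat.modEq_zero_iff_dvd.mpr hpow_dvd_a).symm
  · have hsucc : 10 ^ c * 10 ∣ j * 10 ^ c :=
      pow_succ 10 c ▸ (h.dvd_iff dvd_rfl).mp (pow_dvd_pow_self hten_dvd_a hca)
    rwa [mul_comm j, Nat.mul_dvd_mul_iff_left (by positivity)] at hsucc

theorem stmt_8_general (j c : ℕ) (hj10 : ¬ (10 ∣ j)) (hc : 0 < c) :
    (sharedDigits (tet (j * 10 ^ c) 2) (tet (j * 10 ^ c) 1) : ℤ) -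
      (sharedDigits (tet (j * 10 ^ c) 1) (tet (j * 10 ^ c) 0) : ℤ) = (c : ℤ) := by
  have hten_dvd : 10 ∣ j * 10 ^ c := (dvd_pow_self 10 hc.ne').trans (dvd_mul_left _ j)
  rw [tet_two, tet_one, tet_zero, sharedDigits_pow_self hj10 hc,
    sharedDigits_one_eq_zero_of_ten_dvd hten_dvd]
  simp

theorem stmt_8 (j c : ℕ) (hj : 0 < j) (hj10 : ¬ (10 ∣ j)) (hc : 0 < c) :
    (sharedDigits (tet (j * 10 ^ c) 2) (tet (j * 10 ^ c) 1) : ℤ) -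
      (sharedDigits (tet (j * 10 ^ c) 1) (tet (j * 10 ^ c) 0) : ℤ) = (c : ℤ) :=
  stmt_8_general j c hj10 hc
end
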